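/- Let A and B be disjoint cylinder sets in C × C, let β_A be a baker's map with support A and β_B a baker's map with support B. Then the composition β_A ∘ β_B⁻¹ is a product of three transpositions of cylinder sets. -/

import Mathlib

/-- The Cantor set, modeled as infinite binary sequences. -/
abbrev C := ℕ → Bool

def shift (x : C) : C := fun n => x (n + 1)

def prepend (b : Bool) (y : C) : C
  | 0 => b
  | n + 1 => y n

/-- Concatenate a finite binary word with an infinite binary sequence. -/
def cat (u : List Bool) (w : C) : C := fun n =>
  if h : n < u.length then u.get ⟨n, h⟩ else w (n - u.length)

/-- The cylinder of all infinite sequences with prefix `u`. -/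
def cyl (u : List Bool) : Set C := Set.range (cat u)

/-- `φ` is the baker's map supported on the cylinder set `[u] × [v]`: on that cylinder it
moves the first digit after `u` of the first coordinate to just after `v` in the second
coordinate, and it is the identity elsewhere. -/
def IsBaker (u v : List Bool) (φ : Equiv.Perm (C × C)) : Prop :=
  (∀ w w' : C, φ (cat u w, cat v w') = (cat u (shift w), cat v (prepend (w 0) w'))) ∧
  ∀ p : C × C, p ∉ cyl u ×ˢ cyl v → φ p = p

/-- `φ` is a transposition of two disjoint cylinder sets in `C × C`: it swaps them by
prefix replacement and fixes everything else. -/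
def IsCylTransposition (φ : Equiv.Perm (C × C)) : Prop :=
  ∃ u v u' v' : List Bool,
    (cyl u ×ˢ cyl v) ∩ (cyl u' ×ˢ cyl v') = ∅ ∧
    (∀ w w' : C, φ (cat u w, cat v w') = (cat u' w, cat v' w')) ∧
    (∀ w w' : C, φ (cat u' w, cat v' w') = (cat u w, cat v w')) ∧
    ∀ p : C × C, p ∉ (cyl u ×ˢ cyl v) ∪ (cyl u' ×ˢ cyl v') → φ p = p

/-
On `A = [u] × [v]` the map `βA * βB⁻¹` is `βA`, on `B = [u'] × [v']` it is `βB⁻¹`, and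
elsewhere it is the identity. Split `A` by the first digit `c` after `u`, and `B` by the first
digit `c` after `v'`. Swapping `A_c` with `B_c` for both values of `c` carries `A` onto `B` by
the baker's move (written in the coordinates of `B`) and `B` back onto `A` by its inverse; the
swap of `A` with `B` then relocates the result, giving `βA` on `A` and `βB⁻¹` on `B`.
-/

def dropPrefix (u : List Bool) (x : C) : C := fun n => x (n + u.length)

lemma cat_apply_add_length (u : List Bool) (w : C) (n : ℕ) : cat u w (n + u.length) = w n := by
  simp [cat]

lemma dropPrefix_cat (u : List Bool) (w : C) : dropPrefix u (cat u w) = w :=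
  funext (cat_apply_add_length u w)

lemma cat_injective (u : List Bool) : Function.Injective (cat u) :=
  Function.LeftInverse.injective (dropPrefix_cat u)

lemma cat_append_singleton (u : List Bool) (b : Bool) (w : C) :
    cat (u ++ [b]) w = cat u (prepend b w) := by
  funext n
  simp only [cat, List.length_append, List.length_singleton, List.get_eq_getElem]
  rcases lt_trichotomy n u.length with h | rfl | h
  · simp [h, List.getElem_append_left, show n < u.length + 1 by omega]
  · simp [prepend]
  · obtain ⟨k, rfl⟩ := Nat.exists_eq_add_of_lt h
    simp [show ¬ u.length + k + 1 < u.length + 1 by omega,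
      show ¬ u.length + k + 1 < u.length by omega,
      show u.length + k + 1 - u.length = k + 1 by omega, prepend]

lemma prepend_zero (b : Bool) (w : C) : prepend b w 0 = b := rfl

lemma shift_prepend (b : Bool) (w : C) : shift (prepend b w) = w := rfl

lemma prepend_shift (x : C) : prepend (x 0) (shift x) = x := by
  funext n; cases n <;> rfl

lemma cat_eq_cat_append_head (u : List Bool) (w : C) : cat u w = cat (u ++ [w 0]) (shift w) := by
  rw [cat_append_singleton, prepend_shift]

lemma cat_mem_cyl_append_singleton_iff {u : List Bool} {b : Bool} {w : C} :
    cat u w ∈ cyl (u ++ [b]) ↔ w 0 = b := by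
  constructor
  · rintro ⟨t, ht⟩
    rw [cat_append_singleton] at ht
    rw [← cat_injective u ht]
    rfl
  · rintro rfl
    exact ⟨shift w, (cat_eq_cat_append_head u w).symm⟩

lemma cat_mem_cyl_prod (u v : List Bool) (w w' : C) : (cat u w, cat v w') ∈ cyl u ×ˢ cyl v :=
  ⟨Set.mem_range_self w, Set.mem_range_self w'⟩

lemma cyl_append_singleton_subset (u : List Bool) (b : Bool) : cyl (u ++ [b]) ⊆ cyl u := by
  rintro _ ⟨w, rfl⟩
  exact ⟨prepend b w, (cat_append_singleton u b w).symm⟩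

section CylSwap

variable {a b a' b' : List Bool}

open Classical in
noncomputable def cylSwapFun (a b a' b' : List Bool) (p : C × C) : C × C :=
  if p ∈ cyl a ×ˢ cyl b then (cat a' (dropPrefix a p.1), cat b' (dropPrefix b p.2))
  else if p ∈ cyl a' ×ˢ cyl b' then (cat a (dropPrefix a' p.1), cat b (dropPrefix b' p.2))
  else p

lemma cylSwapFun_apply_left (w w' : C) :
    cylSwapFun a b a' b' (cat a w, cat b w') = (cat a' w, cat b' w') := by
  simp only [cylSwapFun, if_pos (cat_mem_cyl_prod a b w w'), dropPrefix_cat]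

lemma cylSwapFun_apply_right (hd : Disjoint (cyl a ×ˢ cyl b) (cyl a' ×ˢ cyl b')) (w w' : C) :
    cylSwapFun a b a' b' (cat a' w, cat b' w') = (cat a w, cat b w') := by
  have hB := cat_mem_cyl_prod a' b' w w'
  simp only [cylSwapFun, if_neg (hd.notMem_of_mem_right hB), if_pos hB, dropPrefix_cat]

lemma cylSwapFun_apply_of_notMem {p : C × C} (hA : p ∉ cyl a ×ˢ cyl b)
    (hB : p ∉ cyl a' ×ˢ cyl b') : cylSwapFun a b a' b' p = p := by
  simp only [cylSwapFun, if_neg hA, if_neg hB]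

lemma cylSwapFun_involutive (hd : Disjoint (cyl a ×ˢ cyl b) (cyl a' ×ˢ cyl b')) :
    Function.Involutive (cylSwapFun a b a' b') := by
  rintro ⟨x, y⟩
  by_cases hA : (x, y) ∈ cyl a ×ˢ cyl b
  · obtain ⟨⟨w, rfl⟩, w', rfl⟩ := hA
    rw [cylSwapFun_apply_left, cylSwapFun_apply_right hd]
  by_cases hB : (x, y) ∈ cyl a' ×ˢ cyl b'
  · obtain ⟨⟨w, rfl⟩, w', rfl⟩ := hB
    rw [cylSwapFun_apply_right hd, cylSwapFun_apply_left]
  rw [cylSwapFun_apply_of_notMem hA hB, cylSwapFun_apply_of_notMem hA hB]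

noncomputable def cylSwap (hd : Disjoint (cyl a ×ˢ cyl b) (cyl a' ×ˢ cyl b')) :
    Equiv.Perm (C × C) :=
  (cylSwapFun_involutive hd).toPerm

lemma cylSwap_apply (hd : Disjoint (cyl a ×ˢ cyl b) (cyl a' ×ˢ cyl b')) (p : C × C) :
    cylSwap hd p = cylSwapFun a b a' b' p :=
  rfl

lemma isCylTransposition_cylSwap (hd : Disjoint (cyl a ×ˢ cyl b) (cyl a' ×ˢ cyl b')) :
    IsCylTransposition (cylSwap hd) :=
  ⟨a, b, a', b', Set.disjoint_iff_inter_eq_empty.mp hd, cylSwapFun_apply_left,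
    cylSwapFun_apply_right hd, fun _ hp => cylSwapFun_apply_of_notMem
      (fun h => hp (Or.inl h)) (fun h => hp (Or.inr h))⟩

end CylSwap

section IsBaker

variable {u v : List Bool} {β : Equiv.Perm (C × C)}

lemma IsBaker.inv_apply (hβ : IsBaker u v β) (w w' : C) :
    β⁻¹ (cat u w, cat v w') = (cat u (prepend (w' 0) w), cat v (shift w')) := by
  rw [Equiv.Perm.inv_eq_iff_eq, hβ.1, shift_prepend, prepend_zero, prepend_shift]

lemma IsBaker.inv_apply_of_notMem (hβ : IsBaker u v β) {p : C × C}
    (hp : p ∉ cyl u ×ˢ cyl v) : β⁻¹ p = p := by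
  rw [Equiv.Perm.inv_eq_iff_eq, hβ.2 p hp]

end IsBaker

section HalfSwaps

variable {u v u' v' : List Bool}

lemma disjoint_cyl_prod_append_singleton (hd : Disjoint (cyl u ×ˢ cyl v) (cyl u' ×ˢ cyl v'))
    (c : Bool) : Disjoint (cyl (u ++ [c]) ×ˢ cyl v) (cyl u' ×ˢ cyl (v' ++ [c])) :=
  hd.mono (Set.prod_mono (cyl_append_singleton_subset u c) le_rfl)
    (Set.prod_mono le_rfl (cyl_append_singleton_subset v' c))

lemma cylSwapFun_append_singleton_apply_left_of_eq {c : Bool} {w : C} (hw : w 0 = c) (w' : C) :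
    cylSwapFun (u ++ [c]) v u' (v' ++ [c]) (cat u w, cat v w') =
      (cat u' (shift w), cat v' (prepend c w')) := by
  rw [cat_eq_cat_append_head u w, hw, cylSwapFun_apply_left, cat_append_singleton]

lemma cylSwapFun_append_singleton_apply_right_of_eq
    (hd : Disjoint (cyl u ×ˢ cyl v) (cyl u' ×ˢ cyl v')) {c : Bool} (w : C) {w' : C}
    (hw' : w' 0 = c) :
    cylSwapFun (u ++ [c]) v u' (v' ++ [c]) (cat u' w, cat v' w') =
      (cat u (prepend c w), cat v (shift w')) := by
  rw [cat_eq_cat_append_head v' w', hw', cylSwapFun_apply_right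
    (disjoint_cyl_prod_append_singleton hd c), cat_append_singleton]

lemma cylSwapFun_append_singleton_apply_left_of_ne
    (hd : Disjoint (cyl u ×ˢ cyl v) (cyl u' ×ˢ cyl v')) {c : Bool} {w : C} (hw : w 0 ≠ c)
    (w' : C) : cylSwapFun (u ++ [c]) v u' (v' ++ [c]) (cat u w, cat v w') = (cat u w, cat v w') :=
  cylSwapFun_apply_of_notMem (fun h => hw (cat_mem_cyl_append_singleton_iff.mp h.1))
    fun h => hd.notMem_of_mem_left (cat_mem_cyl_prod u v w w')
      ⟨h.1, cyl_append_singleton_subset v' c h.2⟩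

lemma cylSwapFun_append_singleton_apply_right_of_ne
    (hd : Disjoint (cyl u ×ˢ cyl v) (cyl u' ×ˢ cyl v')) {c : Bool} (w : C) {w' : C}
    (hw' : w' 0 ≠ c) :
    cylSwapFun (u ++ [c]) v u' (v' ++ [c]) (cat u' w, cat v' w') = (cat u' w, cat v' w') :=
  cylSwapFun_apply_of_notMem
    (fun h => hd.notMem_of_mem_right (cat_mem_cyl_prod u' v' w w')
      ⟨cyl_append_singleton_subset u c h.1, h.2⟩)
    fun h => hw' (cat_mem_cyl_append_singleton_iff.mp h.2)

lemma cylSwapFun_append_singleton_apply_of_notMem {c : Bool} {p : C × C}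
    (hA : p ∉ cyl u ×ˢ cyl v) (hB : p ∉ cyl u' ×ˢ cyl v') :
    cylSwapFun (u ++ [c]) v u' (v' ++ [c]) p = p :=
  cylSwapFun_apply_of_notMem (fun h => hA ⟨cyl_append_singleton_subset u c h.1, h.2⟩)
    fun h => hB ⟨h.1, cyl_append_singleton_subset v' c h.2⟩

noncomputable def halfSwaps (hd : Disjoint (cyl u ×ˢ cyl v) (cyl u' ×ˢ cyl v')) :
    Equiv.Perm (C × C) :=
  cylSwap (disjoint_cyl_prod_append_singleton hd true) *
    cylSwap (disjoint_cyl_prod_append_singleton hd false)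

lemma halfSwaps_apply_left (hd : Disjoint (cyl u ×ˢ cyl v) (cyl u' ×ˢ cyl v')) (w w' : C) :
    halfSwaps hd (cat u w, cat v w') = (cat u' (shift w), cat v' (prepend (w 0) w')) := by
  simp only [halfSwaps, Equiv.Perm.mul_apply, cylSwap_apply]
  cases hw : w 0 with
  | false =>
    rw [cylSwapFun_append_singleton_apply_left_of_eq hw,
      cylSwapFun_append_singleton_apply_right_of_ne hd _ (by simp [prepend_zero])]
  | true =>
    rw [cylSwapFun_append_singleton_apply_left_of_ne hd (by simp [hw]),
      cylSwapFun_append_singleton_apply_left_of_eq hw]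

lemma halfSwaps_apply_right (hd : Disjoint (cyl u ×ˢ cyl v) (cyl u' ×ˢ cyl v')) (w w' : C) :
    halfSwaps hd (cat u' w, cat v' w') = (cat u (prepend (w' 0) w), cat v (shift w')) := by
  simp only [halfSwaps, Equiv.Perm.mul_apply, cylSwap_apply]
  cases hw' : w' 0 with
  | false =>
    rw [cylSwapFun_append_singleton_apply_right_of_eq hd _ hw',
      cylSwapFun_append_singleton_apply_left_of_ne hd (by simp [prepend_zero])]
  | true =>
    rw [cylSwapFun_append_singleton_apply_right_of_ne hd _ (by simp [hw']),
      cylSwapFun_append_singleton_apply_right_of_eq hd _ hw']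

lemma halfSwaps_apply_of_notMem (hd : Disjoint (cyl u ×ˢ cyl v) (cyl u' ×ˢ cyl v'))
    {p : C × C} (hA : p ∉ cyl u ×ˢ cyl v) (hB : p ∉ cyl u' ×ˢ cyl v') :
    halfSwaps hd p = p := by
  simp only [halfSwaps, Equiv.Perm.mul_apply, cylSwap_apply,
    cylSwapFun_append_singleton_apply_of_notMem hA hB]

end HalfSwaps

lemma IsBaker.mul_inv_eq_cylSwap_mul_halfSwaps {u v u' v' : List Bool}
    {βA βB : Equiv.Perm (C × C)} (hA : IsBaker u v βA) (hB : IsBaker u' v' βB)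
    (hd : Disjoint (cyl u ×ˢ cyl v) (cyl u' ×ˢ cyl v')) :
    βA * βB⁻¹ = cylSwap hd * halfSwaps hd := by
  ext1 ⟨x, y⟩
  simp only [Equiv.Perm.mul_apply, cylSwap_apply]
  by_cases hpA : (x, y) ∈ cyl u ×ˢ cyl v
  · obtain ⟨⟨w, rfl⟩, w', rfl⟩ := hpA
    rw [hB.inv_apply_of_notMem (hd.notMem_of_mem_left (cat_mem_cyl_prod u v w w')), hA.1,
      halfSwaps_apply_left, cylSwapFun_apply_right hd]
  by_cases hpB : (x, y) ∈ cyl u' ×ˢ cyl v'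
  · obtain ⟨⟨w, rfl⟩, w', rfl⟩ := hpB
    rw [hB.inv_apply, hA.2 _ (hd.notMem_of_mem_right (cat_mem_cyl_prod u' v' _ _)),
      halfSwaps_apply_right, cylSwapFun_apply_left]
  rw [hB.inv_apply_of_notMem hpB, hA.2 _ hpA, halfSwaps_apply_of_notMem hd hpA hpB,
    cylSwapFun_apply_of_notMem hpA hpB]

/-- A baker's map composed with the inverse of a baker's map with disjoint cylinder
support is a product of three transpositions of cylinder sets. -/
theorem stmt_9 (u v u' v' : List Bool)
    (hdisj : (cyl u ×ˢ cyl v) ∩ (cyl u' ×ˢ cyl v') = ∅)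
    (βA βB : Equiv.Perm (C × C)) (hA : IsBaker u v βA) (hB : IsBaker u' v' βB) :
    ∃ τ₁ τ₂ τ₃ : Equiv.Perm (C × C),
      IsCylTransposition τ₁ ∧ IsCylTransposition τ₂ ∧ IsCylTransposition τ₃ ∧
      βA * βB⁻¹ = τ₁ * τ₂ * τ₃ := by
  have hd := Set.disjoint_iff_inter_eq_empty.mpr hdisj
  refine ⟨cylSwap hd, cylSwap (disjoint_cyl_prod_append_singleton hd true),
    cylSwap (disjoint_cyl_prod_append_singleton hd false), isCylTransposition_cylSwap _,
    isCylTransposition_cylSwap _, isCylTransposition_cylSwap _, ?_⟩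
  rw [mul_assoc]
  exact hA.mul_inv_eq_cylSwap_mul_halfSwaps hB hd
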